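/- Let H be a subgroup of a finite group G and let Y be an H-set. Then there is a G-equivariant bijection Ind_H^G(I_H(Y)) ≅ I_G(Ind_H^G(Y)), given by [(g,(h,y))] ↦ (g h g⁻¹, [(g,y)]); that is, taking inertia commutes with induction of equivariant sets. -/
import Mathlib


/-- The inertia of a `K`-set `W`: pairs `(g, w)` with `g • w = w`,
with `K` acting by `g' • (g, w) = (g' g g'⁻¹, g' • w)`. -/
def Inertia (K W : Type) [Group K] [MulAction K W] : Type :=
  {p : K × W // p.1 • p.2 = p.2}

instance Inertia.instMulAction (K W : Type) [Group K] [MulAction K W] :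
    MulAction K (Inertia K W) where
  smul g p := ⟨(g * p.1.1 * g⁻¹, g • p.1.2), by
    obtain ⟨⟨h, w⟩, hp⟩ := p
    show (g * h * g⁻¹) • (g • w) = g • w
    rw [mul_smul, mul_smul, inv_smul_smul, hp]⟩
  one_smul p := by
    obtain ⟨⟨h, w⟩, hp⟩ := p
    apply Subtype.ext
    show (1 * h * 1⁻¹, (1 : K) • w) = (h, w)
    simp
  mul_smul g g' p := by
    obtain ⟨⟨h, w⟩, hp⟩ := p
    apply Subtype.ext
    show (g * g' * h * (g * g')⁻¹, (g * g') • w)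
        = (g * (g' * h * g'⁻¹) * g⁻¹, g • g' • w)
    rw [mul_smul]
    group

variable {G : Type} [Group G]

/-- The setoid on `G × Y` identifying `(g h, y)` with `(g, h • y)` for `h ∈ H`. -/
def indSetoid (H : Subgroup G) (Y : Type) [MulAction H Y] : Setoid (G × Y) where
  r p q := ∃ h : H, p.1 = q.1 * h ∧ q.2 = h • p.2
  iseqv := by
    constructor
    · exact fun p => ⟨1, by simp⟩
    · rintro ⟨g₁, y₁⟩ ⟨g₂, y₂⟩ ⟨h, h1, h2⟩
      refine ⟨h⁻¹, ?_, ?_⟩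
      · simp only at h1 ⊢
        rw [h1]
        simp [mul_assoc]
      · simp only at h2 ⊢
        rw [h2]
        simp
    · rintro ⟨g₁, y₁⟩ ⟨g₂, y₂⟩ ⟨g₃, y₃⟩ ⟨h, h1, h2⟩ ⟨h', h1', h2'⟩
      refine ⟨h' * h, ?_, ?_⟩
      · rw [h1, h1', Subgroup.coe_mul, mul_assoc]
      · rw [h2', h2, mul_smul]

/-- The induced `G`-set `Ind_H^G(Y) = (G × Y)/∼`. -/
def Ind (H : Subgroup G) (Y : Type) [MulAction H Y] : Type :=
  Quotient (indSetoid H Y)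

instance Ind.instMulAction (H : Subgroup G) (Y : Type) [MulAction H Y] :
    MulAction G (Ind H Y) where
  smul g := Quotient.map (fun p => (g * p.1, p.2)) (by
    rintro ⟨g₁, y₁⟩ ⟨g₂, y₂⟩ ⟨h, h1, h2⟩
    simp only at h1 h2
    exact ⟨h, by simp only; rw [h1, mul_assoc], h2⟩)
  one_smul := by
    rintro ⟨⟨g, y⟩⟩
    exact congrArg (Quotient.mk _) (by simp)
  mul_smul g g' := by
    rintro ⟨⟨g'', y⟩⟩
    exact congrArg (Quotient.mk _) (by simp [mul_assoc])

def stmt12Fwd (H : Subgroup G) (Y : Type) [MulAction H Y] :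
    Ind H (Inertia H Y) → Inertia G (Ind H Y) :=
  Quotient.lift
    (fun p : G × Inertia H Y =>
      (⟨(p.1 * (p.2.val.1 : G) * p.1⁻¹, Quotient.mk (indSetoid H Y) (p.1, p.2.val.2)),
        by
          obtain ⟨g, ⟨⟨h, y⟩, hp⟩⟩ := p
          show Quotient.mk (indSetoid H Y) ((g * (h:G) * g⁻¹) * g, y)
              = Quotient.mk (indSetoid H Y) (g, y)
          exact Quotient.sound ⟨h, by group, hp.symm⟩⟩ : Inertia G (Ind H Y)))
    (by
      rintro ⟨g₁, ⟨⟨h₁, y₁⟩, hp₁⟩⟩ ⟨g₂, ⟨⟨h₂, y₂⟩, hp₂⟩⟩ ⟨k, hk1, hk2⟩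
      simp only at hk1
      have hk2' : ((h₂, y₂) : H × Y) = (k * h₁ * k⁻¹, k • y₁) :=
        congrArg Subtype.val hk2
      have hh : h₂ = k * h₁ * k⁻¹ := (Prod.ext_iff.mp hk2').1
      have hy : y₂ = k • y₁ := (Prod.ext_iff.mp hk2').2
      apply Subtype.ext
      apply Prod.ext
      · show g₁ * (h₁ : G) * g₁⁻¹ = g₂ * (h₂ : G) * g₂⁻¹
        rw [hk1, hh]
        push_cast
        group
      · exact Quotient.sound ⟨k, hk1, hy⟩)

theorem stmt12Fwd_bij (H : Subgroup G) (Y : Type) [MulAction H Y] :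
    Function.Bijective (stmt12Fwd H Y) := by
  constructor
  · rintro ⟨⟨g₁, ⟨⟨h₁, y₁⟩, hp₁⟩⟩⟩ ⟨⟨g₂, ⟨⟨h₂, y₂⟩, hp₂⟩⟩⟩ heq
    have hval := congrArg Subtype.val heq
    have h1 : g₁ * (h₁ : G) * g₁⁻¹ = g₂ * (h₂ : G) * g₂⁻¹ := (Prod.ext_iff.mp hval).1
    obtain ⟨k, hk1, hk2⟩ := Quotient.exact (Prod.ext_iff.mp hval).2
    simp only at hk1 hk2
    have hcoe : (h₂ : G) = (k : G) * h₁ * (k : G)⁻¹ := by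
      have e1 : (h₂ : G) = g₂⁻¹ * (g₂ * h₂ * g₂⁻¹) * g₂ := by group
      rw [e1, ← h1, hk1]; group
    have hh : h₂ = k * h₁ * k⁻¹ := Subtype.ext (by push_cast; exact hcoe)
    refine Quotient.sound ⟨k, hk1, Subtype.ext ?_⟩
    show ((h₂ : H), y₂) = (k * h₁ * k⁻¹, k • y₁)
    exact Prod.ext hh hk2
  · rintro ⟨⟨g', x⟩, hfix⟩
    obtain ⟨⟨g, y⟩, rfl⟩ := Quotient.exists_rep x
    obtain ⟨k, hk1, hk2⟩ := Quotient.exact hfix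
    simp only at hk1 hk2
    refine ⟨Quotient.mk _ (g, ⟨(k, y), hk2.symm⟩), ?_⟩
    apply Subtype.ext
    apply Prod.ext
    · show g * (k : G) * g⁻¹ = g'
      rw [← hk1]; group
    · rfl

/-- For `H ≤ G` and an `H`-set `Y`, taking inertia commutes with induction:
there is a `G`-equivariant bijection `Ind_H^G(I_H(Y)) ≅ I_G(Ind_H^G(Y))` given by
`[(g, (h, y))] ↦ (g h g⁻¹, [(g, y)])`. -/
theorem stmt_12 (H : Subgroup G) (Y : Type) [MulAction H Y] :
    ∃ e : Ind H (Inertia H Y) ≃ Inertia G (Ind H Y),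
      (∀ (g : G) (p : Inertia H Y),
        (e (Quotient.mk (indSetoid H (Inertia H Y)) (g, p))).val =
          ((g * (p.val.1 : G) * g⁻¹ : G),
            Quotient.mk (indSetoid H Y) (g, p.val.2))) ∧
      (∀ (g' : G) (x : Ind H (Inertia H Y)), e (g' • x) = g' • e x) := by
  refine ⟨Equiv.ofBijective _ (stmt12Fwd_bij H Y), fun g p => rfl, ?_⟩
  intro g' x
  obtain ⟨⟨g, p⟩, rfl⟩ := Quotient.exists_rep x
  apply Subtype.ext
  apply Prod.ext
  · show (g' * g) * (p.val.1 : G) * (g' * g)⁻¹ = g' * (g * p.val.1 * g⁻¹) * g'⁻¹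
    group
  · rfl
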